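/- Let I be an ideal (in our sense) on a countably infinite set X which is not dense (i.e., X ∉ Î). Then C_Î is a precomplete clone, and it is the unique precomplete clone containing C_I. Consequently, C_I is precomplete if and only if I is regular (I = Î). -/

import Mathlib

/-- The set of all finitary operations on `X`: an element of arity index `n`
is an `(n+1)`-ary operation, so that all arities are `≥ 1`. -/
abbrev Ops (X : Type) : Type := Σ n : ℕ, (Fin (n + 1) → X) → X

/-- `opImage f A` is the image `f[A^n]` of the `n`-th power of `A` under the
`n`-ary operation `f`. -/
def opImage {X : Type} (f : Ops X) (A : Set X) : Set X :=
  f.2 '' {x | ∀ i, x i ∈ A}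

/-- An ideal "in our sense": closed under subsets and finite unions, contains all
finite sets, contains at least one infinite set, and does not contain `X`. -/
def IsIdealInOurSense {X : Type} (I : Set (Set X)) : Prop :=
  (∀ A ∈ I, ∀ B ⊆ A, B ∈ I) ∧
  (∀ A ∈ I, ∀ B ∈ I, A ∪ B ∈ I) ∧
  (∀ A : Set X, A.Finite → A ∈ I) ∧
  (∃ A ∈ I, A.Infinite) ∧
  (Set.univ : Set X) ∉ I

/-- The clone `C_I` induced by a collection of sets `I`: all operations mapping
powers of `I`-sets into `I`. -/
def idealClone {X : Type} (I : Set (Set X)) : Set (Ops X) :=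
  {f | ∀ A ∈ I, opImage f A ∈ I}

/-- The unary part `C_I^{(1)}` of the clone induced by `I`. -/
def unaryPart {X : Type} (I : Set (Set X)) : Set (X → X) :=
  {f | ∀ A ∈ I, f '' A ∈ I}

/-- A clone: a set of finitary operations containing all projections and closed
under composition. -/
def IsClone {X : Type} (C : Set (Ops X)) : Prop :=
  (∀ (n : ℕ) (i : Fin (n + 1)), (⟨n, fun x => x i⟩ : Ops X) ∈ C) ∧
  ∀ (n m : ℕ) (f : (Fin (n + 1) → X) → X) (g : Fin (n + 1) → (Fin (m + 1) → X) → X),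
    (⟨n, f⟩ : Ops X) ∈ C → (∀ i, (⟨m, g i⟩ : Ops X) ∈ C) →
    (⟨m, fun x => f fun i => g i x⟩ : Ops X) ∈ C

/-- The clone generated by a set of operations. -/
def cloneGen {X : Type} (F : Set (Ops X)) : Set (Ops X) :=
  ⋂₀ {C : Set (Ops X) | IsClone C ∧ F ⊆ C}

/-- A precomplete clone: a proper clone whose only proper cover is the full clone `O`. -/
def IsPrecompleteClone {X : Type} (C : Set (Ops X)) : Prop :=
  IsClone C ∧ C ≠ Set.univ ∧
  ∀ D : Set (Ops X), IsClone D → C ⊂ D → D = Set.univ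

/-- The regularization `Î` of `I`: all sets `A` such that every infinite subset
of `A` contains an infinite member of `I`. -/
def regularization {X : Type} (I : Set (Set X)) : Set (Set X) :=
  {A | ∀ B ⊆ A, B.Infinite → ∃ C ⊆ B, C.Infinite ∧ C ∈ I}

/-! The heart of the proof is that a clone `D ⊇ C_I` containing an operation `g ∉ C_Î` is all of
`O`. Such a `g` maps some `A^n` with `A ∈ Î` onto a set containing an infinite `B` that meets every
member of `I` in a finite set. Shrinking `B` one coordinate at a time (each coordinate of chosen
preimages either takes finitely many values or, on an infinite part, values in a member of `I`)
puts infinitely many preimages into a power of a single member of `I`; composing `g` with unary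
operations of `C_I` then gives an injection `h : X → B` in `D`. A left inverse of `h` maps members
of `I` to finite sets, so it lies in `C_I`, and `D` contains every unary operation `w = (w ∘ h⁻¹) ∘ h`.
Finally every `F : X^n → X` is `w ∘ s` with `s` an injection of `X^n` into an infinite member of `I`.
The same shrinking shows `C_I ⊆ C_Î`, and maps of an infinite member of `I` onto an arbitrary
countable set separate `C_Î` from `O` and `C_I` from `C_Î` when `I ≠ Î`. -/

open Set Function

section

variable {X : Type}

def unaryOp (f : X → X) : Ops X := ⟨0, fun v => f (v 0)⟩

lemma opImage_unaryOp (f : X → X) (A : Set X) : opImage (unaryOp f) A = f '' A := by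
  ext y
  constructor
  · rintro ⟨v, hv, rfl⟩
    exact ⟨v 0, hv 0, rfl⟩
  · rintro ⟨x, hx, rfl⟩
    exact ⟨fun _ => x, fun _ => hx, rfl⟩

lemma mem_idealClone {J : Set (Set X)} {f : Ops X} :
    f ∈ idealClone J ↔ ∀ A ∈ J, opImage f A ∈ J :=
  Iff.rfl

lemma unaryOp_mem_idealClone_iff {J : Set (Set X)} {f : X → X} :
    unaryOp f ∈ idealClone J ↔ ∀ A ∈ J, f '' A ∈ J := by
  simp only [mem_idealClone, opImage_unaryOp]

lemma mem_idealClone_of_forall_mem {J : Set (Set X)} (hJ : IsLowerSet J) {A : Set X}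
    (hA : A ∈ J) {f : Ops X} (hf : ∀ x, f.2 x ∈ A) : f ∈ idealClone J := by
  intro B _
  refine hJ ?_ hA
  rintro _ ⟨x, -, rfl⟩
  exact hf x

lemma isClone_idealClone {J : Set (Set X)} (hJ : IsLowerSet J) (hJ' : SupClosed J) :
    IsClone (idealClone J) := by
  refine ⟨fun n i A hA => hJ ?_ hA, fun n m f g hf hg A hA => ?_⟩
  · rintro _ ⟨x, hx, rfl⟩
    exact hx i
  · set S : Fin (n + 1) → Set X := fun i => opImage ⟨m, g i⟩ A
    have hS : Finset.univ.sup' Finset.univ_nonempty S ∈ J :=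
      hJ'.finsetSup'_mem _ fun i _ => hg i A hA
    refine hJ ?_ (hf _ hS)
    rintro _ ⟨x, hx, rfl⟩
    exact ⟨fun i => g i x, fun i => Finset.le_sup' S (Finset.mem_univ i) ⟨x, hx, rfl⟩, rfl⟩

lemma IsClone.comp_mem {D : Set (Ops X)} (hD : IsClone D) {w : X → X} (hw : unaryOp w ∈ D)
    {m : ℕ} {f : (Fin (m + 1) → X) → X} (hf : (⟨m, f⟩ : Ops X) ∈ D) :
    (⟨m, w ∘ f⟩ : Ops X) ∈ D :=
  hD.2 0 m _ (fun _ => f) hw fun _ => hf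

lemma isPrecompleteClone_of_forall_not_subset {K M : Set (Ops X)} (hM : IsClone M)
    (hM_ne : M ≠ univ) (hKM : K ⊆ M)
    (hmax : ∀ D, IsClone D → K ⊆ D → ¬D ⊆ M → D = univ) : IsPrecompleteClone M :=
  ⟨hM, hM_ne, fun D hD hMD => hmax D hD (hKM.trans hMD.subset) hMD.not_subset⟩

lemma IsPrecompleteClone.eq_of_forall_not_subset {C K M : Set (Ops X)}
    (hC : IsPrecompleteClone C) (hKC : K ⊆ C) (hM : IsClone M) (hM_ne : M ≠ univ)
    (hmax : ∀ D, IsClone D → K ⊆ D → ¬D ⊆ M → D = univ) : C = M := by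
  have hCM : C ⊆ M := by
    by_contra h
    exact hC.2.1 (hmax C hC.1 hKC h)
  by_contra hne
  exact hM_ne (hC.2.2 M hM (hCM.ssubset_of_ne hne))

lemma Set.Infinite.exists_injective_range_subset {α : Type*} [Countable α] {A : Set X}
    (hA : A.Infinite) : ∃ s : α → X, Injective s ∧ range s ⊆ A := by
  obtain ⟨e, he⟩ := Countable.exists_injective_nat α
  refine ⟨fun a => hA.natEmbedding _ (e a), fun a b hab => he ?_, ?_⟩
  · exact (hA.natEmbedding _).injective (Subtype.ext hab)
  · rintro _ ⟨a, rfl⟩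
    exact (hA.natEmbedding _ (e a)).2

lemma Set.Infinite.exists_image_eq [Countable X] {A B : Set X} (hA : A.Infinite)
    (hB : B.Nonempty) : ∃ f : X → X, f '' A = B ∧ range f ⊆ B := by
  obtain ⟨φ, rfl⟩ := B.to_countable.exists_eq_range hB
  obtain ⟨ι, hι, hιA⟩ := hA.exists_injective_range_subset (α := ℕ)
  have hrange : range (φ ∘ invFun ι) ⊆ range φ := range_comp_subset_range _ _
  refine ⟨φ ∘ invFun ι, (image_subset_range _ _).trans hrange |>.antisymm ?_, hrange⟩
  rintro _ ⟨n, rfl⟩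
  exact ⟨ι n, hιA ⟨n, rfl⟩, congrArg φ (leftInverse_invFun hι n)⟩

namespace IsIdealInOurSense

variable {I : Set (Set X)}

lemma isLowerSet (hI : IsIdealInOurSense I) : IsLowerSet I :=
  fun _ _ hBA hA => hI.1 _ hA _ hBA

lemma supClosed (hI : IsIdealInOurSense I) : SupClosed I :=
  fun _ hA _ hB => hI.2.1 _ hA _ hB

lemma finite_mem (hI : IsIdealInOurSense I) {A : Set X} (hA : A.Finite) : A ∈ I :=
  hI.2.2.1 A hA

lemma exists_infinite_mem (hI : IsIdealInOurSense I) : ∃ A ∈ I, A.Infinite :=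
  hI.2.2.2.1

end IsIdealInOurSense

section Regularization

variable {I : Set (Set X)}

lemma mem_regularization {A : Set X} :
    A ∈ regularization I ↔ ∀ B ⊆ A, B.Infinite → ∃ C ⊆ B, C.Infinite ∧ C ∈ I :=
  Iff.rfl

lemma isLowerSet_regularization : IsLowerSet (regularization I) :=
  fun _ _ hBA hA => mem_regularization.2 fun C hCB => mem_regularization.1 hA C (hCB.trans hBA)

lemma supClosed_regularization : SupClosed (regularization I) := by
  refine fun A hA B hB => mem_regularization.2 fun S hS hS_inf => ?_
  have hcover : S = S ∩ A ∪ S ∩ B := by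
    rw [← inter_union_distrib_left]
    exact (inter_eq_left.2 hS).symm
  rcases infinite_union.1 (hcover ▸ hS_inf) with h | h
  · obtain ⟨C, hC, hC_inf, hCI⟩ := mem_regularization.1 hA _ inter_subset_right h
    exact ⟨C, hC.trans inter_subset_left, hC_inf, hCI⟩
  · obtain ⟨C, hC, hC_inf, hCI⟩ := mem_regularization.1 hB _ inter_subset_right h
    exact ⟨C, hC.trans inter_subset_left, hC_inf, hCI⟩

lemma subset_regularization (hI : IsIdealInOurSense I) : I ⊆ regularization I :=
  fun _ hA => mem_regularization.2 fun B hBA hB => ⟨B, subset_rfl, hB, hI.isLowerSet hBA hA⟩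

lemma exists_infinite_subset_inter_finite_of_notMem_regularization
    (hI : IsIdealInOurSense I) {A : Set X} (hA : A ∉ regularization I) :
    ∃ B ⊆ A, B.Infinite ∧ ∀ C ∈ I, (C ∩ B).Finite := by
  simp only [mem_regularization, not_forall, not_exists, not_and, exists_prop] at hA
  obtain ⟨B, hBA, hB, hBI⟩ := hA
  exact ⟨B, hBA, hB, fun C hC => not_infinite.1 fun hCB =>
    hBI _ inter_subset_right hCB (hI.isLowerSet inter_subset_left hC)⟩

lemma exists_infinite_subset_mapsTo {α : Type*} (hI : IsIdealInOurSense I) {A : Set X}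
    (hA : A ∈ regularization I) {B : Set α} (hB : B.Infinite) {φ : α → X} (hφ : MapsTo φ B A) :
    ∃ B' ⊆ B, B'.Infinite ∧ ∃ D ∈ I, MapsTo φ B' D := by
  by_cases hfin : (φ '' B).Finite
  · exact ⟨B, subset_rfl, hB, φ '' B, hI.finite_mem hfin, mapsTo_image φ B⟩
  obtain ⟨C, hC, hC_inf, hCI⟩ := mem_regularization.1 hA _ hφ.image_subset hfin
  refine ⟨B ∩ φ ⁻¹' C, inter_subset_left, fun hfin' => hC_inf (hfin'.image φ |>.subset ?_), C, hCI,
    fun _ hb => hb.2⟩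
  rintro c hc
  obtain ⟨b, hb, rfl⟩ := hC hc
  exact ⟨b, ⟨hb, hc⟩, rfl⟩

lemma exists_infinite_subset_forall_mapsTo {α ι : Type*} (hI : IsIdealInOurSense I) {A : Set X}
    (hA : A ∈ regularization I) {B : Set α} (hB : B.Infinite) {φ : ι → α → X} (s : Finset ι)
    (hφ : ∀ i ∈ s, MapsTo (φ i) B A) :
    ∃ B' ⊆ B, B'.Infinite ∧ ∃ D ∈ I, ∀ i ∈ s, MapsTo (φ i) B' D := by
  classical
  induction s using Finset.induction_on with
  | empty => exact ⟨B, subset_rfl, hB, ∅, hI.finite_mem finite_empty, by simp⟩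
  | insert j s _ ih =>
    obtain ⟨B', hB'B, hB', D, hD, hφD⟩ := ih fun i hi => hφ i (Finset.mem_insert_of_mem hi)
    obtain ⟨B'', hB''B', hB'', D', hD', hφD'⟩ := exists_infinite_subset_mapsTo hI hA hB'
      ((hφ j (Finset.mem_insert_self j s)).mono_left hB'B)
    refine ⟨B'', hB''B'.trans hB'B, hB'', D ∪ D', hI.supClosed hD hD', fun i hi => ?_⟩
    rcases Finset.mem_insert.1 hi with rfl | hi
    · exact hφD'.mono_right subset_union_right
    · exact (hφD i hi).mono hB''B' subset_union_left

lemma exists_infinite_subset_opImage (hI : IsIdealInOurSense I) {A : Set X}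
    (hA : A ∈ regularization I) {f : Ops X} {B : Set X} (hBf : B ⊆ opImage f A)
    (hB : B.Infinite) : ∃ B' ⊆ B, B'.Infinite ∧ ∃ D ∈ I, B' ⊆ opImage f D := by
  obtain ⟨b₀, -⟩ := hB.nonempty
  have : Nonempty X := ⟨b₀⟩
  set t := invFunOn f.2 {x | ∀ i, x i ∈ A}
  obtain ⟨B', hB'B, hB', D, hD, htD⟩ := exists_infinite_subset_forall_mapsTo hI hA hB
    (φ := fun i b => t b i) Finset.univ fun i _ b hb => invFunOn_mem (hBf hb) i
  refine ⟨B', hB'B, hB', D, hD, fun b hb => ⟨t b, fun i => htD i (Finset.mem_univ i) hb, ?_⟩⟩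
  exact invFunOn_eq (hBf (hB'B hb))

lemma idealClone_subset_idealClone_regularization (hI : IsIdealInOurSense I) :
    idealClone I ⊆ idealClone (regularization I) := by
  refine fun f hf A hA => mem_regularization.2 fun B hBf hB => ?_
  obtain ⟨B', hB'B, hB', D, hD, hB'D⟩ := exists_infinite_subset_opImage hI hA hBf hB
  exact ⟨B', hB'B, hB', hI.isLowerSet hB'D (hf D hD)⟩

end Regularization

section Maximality

variable {I : Set (Set X)} {D : Set (Ops X)}

lemma exists_injective_unaryOp_mem [Countable X] [Nonempty X] (hI : IsIdealInOurSense I)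
    (hD : IsClone D) (hID : idealClone I ⊆ D) {g : Ops X} (hgD : g ∈ D)
    (hg : g ∉ idealClone (regularization I)) :
    ∃ h : X → X, Injective h ∧ unaryOp h ∈ D ∧ ∀ C ∈ I, (C ∩ range h).Finite := by
  simp only [mem_idealClone, not_forall, exists_prop] at hg
  obtain ⟨A, hA, hgA⟩ := hg
  obtain ⟨B, hBg, hB, hBI⟩ :=
    exists_infinite_subset_inter_finite_of_notMem_regularization hI hgA
  obtain ⟨B', hB'B, hB', D₀, hD₀, hB'D₀⟩ := exists_infinite_subset_opImage hI hA hBg hB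
  obtain ⟨β, hβ, hβB'⟩ := hB'.exists_injective_range_subset (α := X)
  set t := invFunOn g.2 {x | ∀ i, x i ∈ D₀}
  have ht : ∀ x, g.2 (t (β x)) = β x := fun x => invFunOn_eq (hB'D₀ (hβB' ⟨x, rfl⟩))
  have hu : ∀ i, unaryOp (fun x => t (β x) i) ∈ D := fun i =>
    hID (mem_idealClone_of_forall_mem hI.isLowerSet hD₀
      fun v => invFunOn_mem (hB'D₀ (hβB' ⟨v 0, rfl⟩)) i)
  have hβD : unaryOp β ∈ D := by
    have := hD.2 g.1 0 g.2 (fun i => (unaryOp fun x => t (β x) i).2) hgD hu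
    simpa only [unaryOp, ht] using this
  refine ⟨β, hβ, hβD, fun C hC => (hBI C hC).subset ?_⟩
  exact inter_subset_inter_right C (hβB'.trans hB'B)

lemma forall_unaryOp_mem_of_injective [Nonempty X] (hI : IsIdealInOurSense I)
    (hD : IsClone D) (hID : idealClone I ⊆ D) {h : X → X} (hh : Injective h)
    (hhD : unaryOp h ∈ D) (hhI : ∀ C ∈ I, (C ∩ range h).Finite) (w : X → X) :
    unaryOp w ∈ D := by
  -- `invFun h` is constant off `range h`, so it maps each member of `I` to a finite set
  have himage : ∀ C ∈ I, (invFun h '' C).Finite := by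
    intro C hC
    refine (((hhI C hC).image (invFun h)).union (finite_singleton (Classical.choice ‹_›))).subset ?_
    rintro _ ⟨y, hy, rfl⟩
    by_cases hyh : y ∈ range h
    · exact Or.inl ⟨y, ⟨hy, hyh⟩, rfl⟩
    · exact Or.inr (invFun_neg hyh)
  have hwv : unaryOp (w ∘ invFun h) ∈ D := by
    refine hID (unaryOp_mem_idealClone_iff.2 fun C hC => hI.finite_mem ?_)
    rw [image_comp]
    exact (himage C hC).image w
  have : unaryOp ((w ∘ invFun h) ∘ h) ∈ D := hD.comp_mem hwv hhD
  rwa [comp_assoc, (leftInverse_invFun hh).comp_eq_id, comp_id] at this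

lemma eq_univ_of_forall_unaryOp_mem [Countable X] [Nonempty X] (hI : IsIdealInOurSense I)
    (hD : IsClone D) (hID : idealClone I ⊆ D) (hunary : ∀ w, unaryOp w ∈ D) : D = univ := by
  obtain ⟨A, hAI, hA⟩ := hI.exists_infinite_mem
  refine eq_univ_of_forall fun ⟨m, F⟩ => ?_
  obtain ⟨s, hs, hsA⟩ := hA.exists_injective_range_subset (α := Fin (m + 1) → X)
  have hsD : (⟨m, s⟩ : Ops X) ∈ D :=
    hID (mem_idealClone_of_forall_mem hI.isLowerSet hAI fun x => hsA ⟨x, rfl⟩)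
  have := hD.comp_mem (hunary (F ∘ invFun s)) hsD
  rwa [comp_assoc, (leftInverse_invFun hs).comp_eq_id, comp_id] at this

lemma eq_univ_of_not_subset_idealClone_regularization [Countable X] [Nonempty X]
    (hI : IsIdealInOurSense I) (hD : IsClone D) (hID : idealClone I ⊆ D)
    (hDI : ¬D ⊆ idealClone (regularization I)) : D = univ := by
  obtain ⟨g, hgD, hg⟩ := not_subset.1 hDI
  obtain ⟨h, hh, hhD, hhI⟩ := exists_injective_unaryOp_mem hI hD hID hgD hg
  exact eq_univ_of_forall_unaryOp_mem hI hD hID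
    (forall_unaryOp_mem_of_injective hI hD hID hh hhD hhI)

end Maximality

section Separation

variable [Countable X] {I : Set (Set X)}

lemma idealClone_regularization_ne_univ (hI : IsIdealInOurSense I)
    (hnd : (univ : Set X) ∉ regularization I) : idealClone (regularization I) ≠ univ := by
  obtain ⟨A, hAI, hA⟩ := hI.exists_infinite_mem
  obtain ⟨x, -⟩ := hA.nonempty
  obtain ⟨f, hfA, -⟩ := hA.exists_image_eq ⟨x, mem_univ x⟩
  intro huniv
  have hf : unaryOp f ∈ idealClone (regularization I) := huniv ▸ mem_univ _
  have hfA_mem := unaryOp_mem_idealClone_iff.1 hf A (subset_regularization hI hAI)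
  rw [hfA] at hfA_mem
  exact hnd hfA_mem

lemma eq_regularization_of_idealClone_eq (hI : IsIdealInOurSense I)
    (h : idealClone I = idealClone (regularization I)) : I = regularization I := by
  refine (subset_regularization hI).antisymm fun A hA => ?_
  by_contra hAI
  have hA_inf : A.Infinite := fun hfin => hAI (hI.finite_mem hfin)
  obtain ⟨A₀, hA₀I, hA₀⟩ := hI.exists_infinite_mem
  obtain ⟨f, hfA₀, hfA⟩ := hA₀.exists_image_eq hA_inf.nonempty
  have hf : unaryOp f ∈ idealClone I :=
    h ▸ mem_idealClone_of_forall_mem isLowerSet_regularization hA fun v => hfA ⟨v 0, rfl⟩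
  exact hAI (hfA₀ ▸ unaryOp_mem_idealClone_iff.1 hf A₀ hA₀I)

end Separation

end

/-- If `I` is not dense, then `C_Î` is precomplete and is the unique precomplete
clone above `C_I`; consequently `C_I` is precomplete iff `I` is regular. -/
theorem stmt10 {X : Type} [Countable X] [Infinite X]
    {I : Set (Set X)} (hI : IsIdealInOurSense I)
    (hnd : (Set.univ : Set X) ∉ regularization I) :
    IsPrecompleteClone (idealClone (regularization I)) ∧
    (∀ C : Set (Ops X), IsPrecompleteClone C → idealClone I ⊆ C →
      C = idealClone (regularization I)) ∧
    (IsPrecompleteClone (idealClone I) ↔ I = regularization I) := by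
  have hclone := isClone_idealClone (isLowerSet_regularization (I := I)) supClosed_regularization
  have hne := idealClone_regularization_ne_univ hI hnd
  have hmax : ∀ D, IsClone D → idealClone I ⊆ D → ¬D ⊆ idealClone (regularization I) →
      D = univ := fun D hD => eq_univ_of_not_subset_idealClone_regularization hI hD
  have hpre := isPrecompleteClone_of_forall_not_subset hclone hne
    (idealClone_subset_idealClone_regularization hI) hmax
  have huniq : ∀ C : Set (Ops X), IsPrecompleteClone C → idealClone I ⊆ C →
      C = idealClone (regularization I) :=
    fun C hC hIC => hC.eq_of_forall_not_subset hIC hclone hne hmax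
  refine ⟨hpre, huniq, fun h => eq_regularization_of_idealClone_eq hI (huniq _ h subset_rfl),
    fun h => ?_⟩
  rw [h]
  exact hpre
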